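/- arXiv:2407.09715 — 2 statements merged into one kernel-verified Lean document; each statement's English description precedes it below -/
import Mathlib

section
/- Let d ≥ 1 and let A be a bilinear map from S(ℤ^d) × S(ℤ^d) to ℂ, where S(ℤ^d) is the space of rapidly decreasing functions ℤ^d → ℂ, and suppose there exist C > 0 and k ∈ ℕ such that |A(f,g)| ≤ C p_k(f) p_k(g) for all f, g ∈ S(ℤ^d). Then there exists a unique function ω : ℤ^d × ℤ^d → ℂ of polynomial growth such that for all f, g ∈ S(ℤ^d) the double series ∑_{m,n ∈ ℤ^d} ω(m,n) f(m) g(n) converges absolutely and equals A(f,g). (Uniqueness: necessarily ω(m,n) = A(δ_m, δ_n), where δ_m is the indicator function of {m}.) -/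
noncomputable section

/-- `|n|² = n₁² + ⋯ + n_d²` for `n ∈ ℤ^d`, as a real number. -/
def normSq (d : ℕ) (n : Fin d → ℤ) : ℝ := ∑ i, ((n i : ℝ)) ^ 2

/-- `f : ℤ^d → ℂ` is rapidly decreasing: `sup_n (1+|n|²)^{k/2} |f(n)| < ∞` for every `k`. -/
def RapidDecay (d : ℕ) (f : (Fin d → ℤ) → ℂ) : Prop :=
  ∀ k : ℕ, ∃ C : ℝ, ∀ n, (1 + normSq d n) ^ ((k : ℝ) / 2) * ‖f n‖ ≤ C

/-- The seminorm `p_k(f) = sup_n (1+|n|²)^{k/2} |f(n)|` on rapidly decreasing functions. -/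
def pk (d k : ℕ) (f : (Fin d → ℤ) → ℂ) : ℝ :=
  ⨆ n : Fin d → ℤ, (1 + normSq d n) ^ ((k : ℝ) / 2) * ‖f n‖

/-- `ω : ℤ^d × ℤ^d → ℂ` has polynomial growth. -/
def PolyGrowth (d : ℕ) (ω : (Fin d → ℤ) → (Fin d → ℤ) → ℂ) : Prop :=
  ∃ C : ℝ, 0 < C ∧ ∃ N : ℕ, ∀ m n, ‖ω m n‖ ≤
    C * (1 + normSq d m) ^ ((N : ℝ) / 2) * (1 + normSq d n) ^ ((N : ℝ) / 2)

/-- The space `S(ℤ^d)` of rapidly decreasing functions, as a `ℂ`-submodule of all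
functions `ℤ^d → ℂ`. -/
def SchwartzZ (d : ℕ) : Submodule ℂ ((Fin d → ℤ) → ℂ) where
  carrier := {f | RapidDecay d f}
  zero_mem' := fun k => ⟨0, fun n => by simp⟩
  add_mem' := by
    intro f g hf hg k
    obtain ⟨Cf, hCf⟩ := hf k
    obtain ⟨Cg, hCg⟩ := hg k
    refine ⟨Cf + Cg, fun n => ?_⟩
    have hw : (0 : ℝ) ≤ (1 + normSq d n) ^ ((k : ℝ) / 2) := by
      apply Real.rpow_nonneg
      have : (0 : ℝ) ≤ normSq d n := Finset.sum_nonneg fun i _ => sq_nonneg _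
      linarith
    calc (1 + normSq d n) ^ ((k : ℝ) / 2) * ‖(f + g) n‖
        ≤ (1 + normSq d n) ^ ((k : ℝ) / 2) * (‖f n‖ + ‖g n‖) :=
          mul_le_mul_of_nonneg_left (norm_add_le _ _) hw
      _ = (1 + normSq d n) ^ ((k : ℝ) / 2) * ‖f n‖
          + (1 + normSq d n) ^ ((k : ℝ) / 2) * ‖g n‖ := by ring
      _ ≤ Cf + Cg := add_le_add (hCf n) (hCg n)
  smul_mem' := by
    intro c f hf k
    obtain ⟨C, hC⟩ := hf k
    refine ⟨‖c‖ * C, fun n => ?_⟩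
    have h : (1 + normSq d n) ^ ((k : ℝ) / 2) * ‖(c • f) n‖
        = ‖c‖ * ((1 + normSq d n) ^ ((k : ℝ) / 2) * ‖f n‖) := by
      simp [norm_smul]; ring
    rw [h]
    exact mul_le_mul_of_nonneg_left (hC n) (norm_nonneg c)

namespace SKT

lemma normSq_nonneg (d : ℕ) (n : Fin d → ℤ) : 0 ≤ normSq d n :=
  Finset.sum_nonneg fun _ _ => sq_nonneg _

lemma one_add_pos (d : ℕ) (n : Fin d → ℤ) : (0:ℝ) < 1 + normSq d n := by
  linarith [normSq_nonneg d n]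

def wt (d k : ℕ) (n : Fin d → ℤ) : ℝ := (1 + normSq d n) ^ ((k:ℝ)/2)

lemma wt_pos {d k : ℕ} (n : Fin d → ℤ) : 0 < wt d k n :=
  Real.rpow_pos_of_pos (one_add_pos d n) _

lemma wt_add (d k j : ℕ) (n : Fin d → ℤ) :
    wt d (k + 2*j) n = wt d k n * (1 + normSq d n) ^ j := by
  unfold wt
  rw [show ((k + 2*j : ℕ) : ℝ)/2 = (k:ℝ)/2 + (j:ℕ) by push_cast; ring,
    Real.rpow_add (one_add_pos d n), Real.rpow_natCast]

lemma pk_eq (d k : ℕ) (f : (Fin d → ℤ) → ℂ) :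
    pk d k f = ⨆ n, wt d k n * ‖f n‖ := rfl

lemma bddAbove_wt {d k : ℕ} {f : (Fin d → ℤ) → ℂ} (hf : RapidDecay d f) :
    BddAbove (Set.range fun n => wt d k n * ‖f n‖) := by
  obtain ⟨Cf, hCf⟩ := hf k
  exact ⟨Cf, by rintro _ ⟨n, rfl⟩; exact hCf n⟩

lemma le_pk {d k : ℕ} {f : (Fin d → ℤ) → ℂ} (hf : RapidDecay d f) (n : Fin d → ℤ) :
    wt d k n * ‖f n‖ ≤ pk d k f :=
  le_ciSup (bddAbove_wt hf) n

lemma pk_nonneg {d k : ℕ} {f : (Fin d → ℤ) → ℂ} (hf : RapidDecay d f) :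
    0 ≤ pk d k f :=
  le_trans (mul_nonneg (wt_pos _).le (norm_nonneg _)) (le_pk hf fun _ => 0)

lemma pk_le {d k : ℕ} {f : (Fin d → ℤ) → ℂ} {c : ℝ}
    (h : ∀ n, wt d k n * ‖f n‖ ≤ c) : pk d k f ≤ c := ciSup_le h

lemma pk_mono {d k : ℕ} {f g : (Fin d → ℤ) → ℂ} (hg : RapidDecay d g)
    (h : ∀ n, ‖f n‖ ≤ ‖g n‖) : pk d k f ≤ pk d k g :=
  pk_le fun n => le_trans (mul_le_mul_of_nonneg_left (h n) (wt_pos n).le) (le_pk hg n)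

def dl (d : ℕ) (m : Fin d → ℤ) : (Fin d → ℤ) → ℂ := fun n => if n = m then 1 else 0

lemma dl_rd (d : ℕ) (m : Fin d → ℤ) : RapidDecay d (dl d m) := by
  intro k
  refine ⟨wt d k m, fun n => ?_⟩
  unfold dl
  split_ifs with h
  · subst h; simp [wt]
  · simpa using (wt_pos (d := d) (k := k) m).le

lemma pk_dl (d k : ℕ) (m : Fin d → ℤ) : pk d k (dl d m) = wt d k m := by
  refine le_antisymm (pk_le fun n => ?_) ?_
  · unfold dl
    split_ifs with h
    · subst h; simp [wt]
    · simpa using (wt_pos (d := d) (k := k) m).le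
  · have := le_pk (dl_rd d m) (k := k) m
    simpa [dl, wt] using this

/-- Summability over ℤ of `(1+x²)⁻¹`. -/
lemma summable_base : Summable (fun x : ℤ => ((1:ℝ) + (x:ℝ)^2)⁻¹) := by
  have h1 : Summable (fun x : ℤ => 1 / (x:ℝ)^2) := Real.summable_one_div_int_pow.mpr one_lt_two
  have h2 : Summable (fun x : ℤ => if x = 0 then (1:ℝ) else 0) :=
    summable_of_ne_finset_zero (s := {0}) (by intro b hb; simp at hb; simp [hb])
  refine Summable.of_nonneg_of_le (fun x => by positivity) (fun x => ?_) (h1.add h2)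
  by_cases hx : x = 0
  · subst hx; simp
  · have hx2 : (1:ℝ) ≤ (x:ℝ)^2 := by
      have h0 : (0:ℤ) < x^2 := by positivity
      have : (1:ℤ) ≤ x^2 := h0
      exact_mod_cast this
    simp only [hx, if_false, add_zero, one_div]
    refine inv_anti₀ (by positivity) (by linarith)

lemma summable_prod_inv (d : ℕ) :
    Summable (fun n : Fin d → ℤ => ∏ i, ((1:ℝ) + ((n i : ℝ))^2)⁻¹) := by
  induction d with
  | zero =>
      simp only [Finset.univ_eq_empty, Finset.prod_empty]
      exact summable_of_finite_support (Set.toFinite _)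
  | succ d ih =>
      have hs : Summable (fun p : ℤ × (Fin d → ℤ) =>
          ((1:ℝ) + ((p.1:ℝ))^2)⁻¹ * ∏ i, ((1:ℝ) + ((p.2 i : ℝ))^2)⁻¹) :=
        Summable.mul_of_nonneg (f := fun x : ℤ => ((1:ℝ) + (x:ℝ)^2)⁻¹)
          (g := fun n : Fin d → ℤ => ∏ i, ((1:ℝ) + ((n i : ℝ))^2)⁻¹)
          summable_base ih (fun x => by positivity) (fun n => by positivity)
      have he := (Fin.consEquiv (fun _ : Fin (d+1) => ℤ)).summable_iff
        (f := fun n : Fin (d+1) → ℤ => ∏ i, ((1:ℝ) + ((n i : ℝ))^2)⁻¹)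
      refine he.mp (hs.congr fun p => ?_)
      show ((1:ℝ) + ((p.1:ℝ))^2)⁻¹ * ∏ i, ((1:ℝ) + ((p.2 i : ℝ))^2)⁻¹
          = ∏ i, ((1:ℝ) + (((Fin.cons p.1 p.2 : ∀ _ : Fin (d+1), ℤ) i : ℤ) : ℝ)^2)⁻¹
      rw [Fin.prod_univ_succ]
      simp

lemma summable_wt_inv (d : ℕ) :
    Summable (fun n : Fin d → ℤ => (((1 + normSq d n)) ^ d)⁻¹) := by
  refine Summable.of_nonneg_of_le
    (fun n => inv_nonneg.mpr (pow_nonneg (one_add_pos d n).le d)) (fun n => ?_)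
    (summable_prod_inv d)
  have h1 : ∏ i : Fin d, ((1:ℝ) + ((n i : ℝ))^2) ≤ (1 + normSq d n)^d := by
    calc ∏ i : Fin d, ((1:ℝ) + ((n i : ℝ))^2)
        ≤ ∏ _i : Fin d, (1 + normSq d n) := by
          refine Finset.prod_le_prod (fun i _ => by positivity) (fun i _ => ?_)
          have h := Finset.single_le_sum (f := fun j : Fin d => ((n j : ℝ))^2)
            (fun j _ => sq_nonneg _) (Finset.mem_univ i)
          simp only [normSq]; linarith
      _ = (1 + normSq d n)^d := by simp [Finset.prod_const]
  have h2 : (0:ℝ) < ∏ i : Fin d, ((1:ℝ) + ((n i : ℝ))^2) :=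
    Finset.prod_pos (fun i _ => by positivity)
  calc ((1 + normSq d n)^d)⁻¹ ≤ (∏ i : Fin d, ((1:ℝ) + ((n i : ℝ))^2))⁻¹ := inv_anti₀ h2 h1
    _ = ∏ i : Fin d, ((1:ℝ) + ((n i : ℝ))^2)⁻¹ := by rw [← Finset.prod_inv_distrib]

variable {d : ℕ}

lemma mem_rd (f : SchwartzZ d) : RapidDecay d (f : (Fin d → ℤ) → ℂ) := f.2

/-- delta as an element of the Schwartz space -/
def D (d : ℕ) (m : Fin d → ℤ) : SchwartzZ d := ⟨dl d m, dl_rd d m⟩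

lemma D_coe (d : ℕ) (m : Fin d → ℤ) : (D d m : (Fin d → ℤ) → ℂ) = dl d m := rfl

/-- truncation to a finite set, as an element of the Schwartz space -/
def pt (f : SchwartzZ d) (F : Finset (Fin d → ℤ)) : SchwartzZ d :=
  ∑ m ∈ F, (f : (Fin d → ℤ) → ℂ) m • D d m

lemma pt_apply (f : SchwartzZ d) (F : Finset (Fin d → ℤ)) (n : Fin d → ℤ) :
    (pt f F : (Fin d → ℤ) → ℂ) n = if n ∈ F then (f : (Fin d → ℤ) → ℂ) n else 0 := by
  classical
  have h1 : (pt f F : (Fin d → ℤ) → ℂ) n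
      = ∑ m ∈ F, (f : (Fin d → ℤ) → ℂ) m * dl d m n := by
    simp [pt, Submodule.coe_sum, Finset.sum_apply, D_coe]
  rw [h1]
  have h2 : ∀ m ∈ F, (f : (Fin d → ℤ) → ℂ) m * dl d m n
      = if n = m then (f : (Fin d → ℤ) → ℂ) m else 0 := by
    intro m _
    simp only [dl]
    split_ifs <;> simp
  rw [Finset.sum_congr rfl h2, Finset.sum_ite_eq]

lemma sub_pt_apply (f : SchwartzZ d) (F : Finset (Fin d → ℤ)) (n : Fin d → ℤ) :
    ((f - pt f F : SchwartzZ d) : (Fin d → ℤ) → ℂ) n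
      = if n ∈ F then 0 else (f : (Fin d → ℤ) → ℂ) n := by
  have h : ((f - pt f F : SchwartzZ d) : (Fin d → ℤ) → ℂ) n
      = (f : (Fin d → ℤ) → ℂ) n - (pt f F : (Fin d → ℤ) → ℂ) n := by
    simp
  rw [h, pt_apply]
  split_ifs <;> simp

lemma pk_pt_le (k : ℕ) (f : SchwartzZ d) (F : Finset (Fin d → ℤ)) :
    pk d k (pt f F : (Fin d → ℤ) → ℂ) ≤ pk d k (f : (Fin d → ℤ) → ℂ) := by
  refine pk_mono f.2 fun n => ?_
  rw [pt_apply]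
  split_ifs <;> simp

/-- tails are small in every seminorm -/
lemma tail_small (k : ℕ) (f : SchwartzZ d) {ε : ℝ} (hε : 0 < ε) :
    ∃ F₀ : Finset (Fin d → ℤ), ∀ F : Finset (Fin d → ℤ), F₀ ⊆ F →
      pk d k ((f - pt f F : SchwartzZ d) : (Fin d → ℤ) → ℂ) ≤ ε := by
  classical
  obtain ⟨Cf, hCf⟩ := f.2 (k + 2*1)
  have hCf' : ∀ m, wt d (k + 2*1) m * ‖(f : (Fin d → ℤ) → ℂ) m‖ ≤ Cf := hCf
  have hCf0 : 0 ≤ Cf :=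
    le_trans (mul_nonneg (wt_pos _).le (norm_nonneg _)) (hCf' (fun _ => 0))
  set M : ℕ := ⌈Cf / ε⌉₊ with hM
  refine ⟨Fintype.piFinset (fun _ => Finset.Icc (-(M:ℤ)) (M:ℤ)), fun F hF => ?_⟩
  refine pk_le fun n => ?_
  rw [sub_pt_apply]
  by_cases hn : n ∈ F
  · simp only [hn, if_true, norm_zero, mul_zero]
    exact hε.le
  · simp only [hn, if_false]
    have hn0 : n ∉ Fintype.piFinset (fun _ : Fin d => Finset.Icc (-(M:ℤ)) (M:ℤ)) :=
      fun h => hn (hF h)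
    obtain ⟨i, hi⟩ : ∃ i, n i ∉ Finset.Icc (-(M:ℤ)) (M:ℤ) := by
      by_contra h
      push_neg at h
      exact hn0 (Fintype.mem_piFinset.mpr h)
    have hiM : (M:ℤ) < |n i| := by
      rw [Finset.mem_Icc] at hi
      push_neg at hi
      rcases le_or_gt (-(M:ℤ)) (n i) with h | h
      · exact lt_of_lt_of_le (hi h) (le_abs_self _)
      · have hh : (M:ℤ) < -(n i) := by linarith
        exact lt_of_lt_of_le hh (neg_le_abs _)
    have hr : ((M:ℝ))^2 ≤ normSq d n := by
      have h1 : ((M:ℤ):ℝ) ≤ ((|n i|:ℤ):ℝ) := by exact_mod_cast hiM.le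
      rw [Int.cast_abs] at h1
      have h2 : ((M:ℝ))^2 ≤ ((n i : ℝ))^2 := by
        rw [← sq_abs ((n i : ℝ))]
        exact pow_le_pow_left₀ (by positivity) (by exact_mod_cast h1) 2
      have h3 : ((n i : ℝ))^2 ≤ normSq d n := by
        have h := Finset.single_le_sum (f := fun j : Fin d => ((n j : ℝ))^2)
          (fun j _ => sq_nonneg _) (Finset.mem_univ i)
        simpa [normSq] using h
      linarith
    have h2 : wt d k n * (1 + normSq d n) * ‖(f : (Fin d → ℤ) → ℂ) n‖ ≤ Cf := by
      have h := hCf' n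
      have hw : wt d (k + 2*1) n = wt d k n * (1 + normSq d n) := by
        rw [wt_add]; ring
      calc wt d k n * (1 + normSq d n) * ‖(f : (Fin d → ℤ) → ℂ) n‖
          = wt d (k + 2*1) n * ‖(f : (Fin d → ℤ) → ℂ) n‖ := by rw [hw]
        _ ≤ Cf := h
    have h3 : Cf ≤ ε * (1 + normSq d n) := by
      have hle : Cf / ε ≤ (M:ℝ) := Nat.le_ceil _
      have hMle : (M:ℝ) ≤ 1 + normSq d n := by nlinarith [hr, sq_nonneg ((M:ℝ) - 1)]
      have hh : Cf / ε ≤ 1 + normSq d n := le_trans hle hMle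
      calc Cf = (Cf / ε) * ε := by field_simp
        _ ≤ (1 + normSq d n) * ε := mul_le_mul_of_nonneg_right hh hε.le
        _ = ε * (1 + normSq d n) := by ring
    have hpos := one_add_pos d n
    have hwn := (wt_pos (d := d) (k := k) n).le
    have hnn := norm_nonneg ((f : (Fin d → ℤ) → ℂ) n)
    nlinarith [h2, h3]

/-- rectangle sums equal the bilinear map on truncations -/
lemma sum_rect (A : SchwartzZ d →ₗ[ℂ] SchwartzZ d →ₗ[ℂ] ℂ) (f g : SchwartzZ d)
    (F : Finset (Fin d → ℤ)) :
    ∑ p ∈ F ×ˢ F, (A (D d p.1) (D d p.2))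
        * (f : (Fin d → ℤ) → ℂ) p.1 * (g : (Fin d → ℤ) → ℂ) p.2
      = A (pt f F) (pt g F) := by
  rw [Finset.sum_product]
  simp only [pt, map_sum, LinearMap.sum_apply, map_smul, LinearMap.smul_apply, smul_eq_mul,
    Finset.mul_sum]
  rw [Finset.sum_comm]
  exact Finset.sum_congr rfl fun n _ => Finset.sum_congr rfl fun m _ => by ring

lemma tendsto_rect : Filter.Tendsto (fun F : Finset (Fin d → ℤ) => F ×ˢ F)
    Filter.atTop Filter.atTop := by
  rw [Filter.tendsto_atTop_atTop]
  intro S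
  refine ⟨S.image Prod.fst ∪ S.image Prod.snd, fun F hF => ?_⟩
  intro p hp
  exact Finset.mem_product.mpr
    ⟨hF (Finset.mem_union_left _ (Finset.mem_image_of_mem _ hp)),
     hF (Finset.mem_union_right _ (Finset.mem_image_of_mem _ hp))⟩

end SKT

open SKT

/-- Schwartz kernel theorem on `ℤ^d`. If `A` is a bilinear functional on
`S(ℤ^d) × S(ℤ^d)` satisfying `|A(f,g)| ≤ C p_k(f) p_k(g)`, then there is a unique
polynomial-growth function `ω : ℤ^d × ℤ^d → ℂ` with
`A(f,g) = ∑_{m,n} ω(m,n) f(m) g(n)` (absolutely convergent) for all `f, g ∈ S(ℤ^d)`. -/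


theorem schwartz_kernel_theorem (d : ℕ) (hd : 1 ≤ d)
    (A : SchwartzZ d →ₗ[ℂ] SchwartzZ d →ₗ[ℂ] ℂ)
    (C : ℝ) (hC : 0 < C) (k : ℕ)
    (hA : ∀ f g : SchwartzZ d,
      ‖A f g‖ ≤ C * pk d k (f : (Fin d → ℤ) → ℂ) * pk d k (g : (Fin d → ℤ) → ℂ)) :
    ∃! ω : (Fin d → ℤ) → (Fin d → ℤ) → ℂ, PolyGrowth d ω ∧
      ∀ f g : SchwartzZ d,
        Summable (fun p : (Fin d → ℤ) × (Fin d → ℤ) =>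
          ‖ω p.1 p.2 * (f : (Fin d → ℤ) → ℂ) p.1 * (g : (Fin d → ℤ) → ℂ) p.2‖) ∧
        (∑' p : (Fin d → ℤ) × (Fin d → ℤ),
          ω p.1 p.2 * (f : (Fin d → ℤ) → ℂ) p.1 * (g : (Fin d → ℤ) → ℂ) p.2) = A f g := by
  classical
  refine ⟨fun m n => A (D d m) (D d n), ⟨?_, ?_⟩, ?_⟩
  · -- polynomial growth
    refine ⟨C, hC, k, fun m n => ?_⟩
    have h := hA (D d m) (D d n)
    rw [D_coe, D_coe, pk_dl, pk_dl] at h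
    exact h
  · -- representation
    intro f g
    have hωb : ∀ m n, ‖A (D d m) (D d n)‖ ≤ C * wt d k m * wt d k n := by
      intro m n
      have h := hA (D d m) (D d n)
      rwa [D_coe, D_coe, pk_dl, pk_dl] at h
    obtain ⟨Cf, hCf⟩ := f.2 (k + 2*d)
    obtain ⟨Cg, hCg⟩ := g.2 (k + 2*d)
    have hCf' : ∀ m, wt d (k + 2*d) m * ‖(f : (Fin d → ℤ) → ℂ) m‖ ≤ Cf := hCf
    have hCg' : ∀ m, wt d (k + 2*d) m * ‖(g : (Fin d → ℤ) → ℂ) m‖ ≤ Cg := hCg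
    have hCf0 : 0 ≤ Cf :=
      le_trans (mul_nonneg (wt_pos _).le (norm_nonneg _)) (hCf' (fun _ => 0))
    have hCg0 : 0 ≤ Cg :=
      le_trans (mul_nonneg (wt_pos _).le (norm_nonneg _)) (hCg' (fun _ => 0))
    have keyf : ∀ m, wt d k m * ‖(f : (Fin d → ℤ) → ℂ) m‖ ≤ Cf * ((1 + normSq d m)^d)⁻¹ := by
      intro m
      have hX : (0:ℝ) < (1 + normSq d m)^d := pow_pos (one_add_pos d m) d
      rw [← div_eq_mul_inv, le_div_iff₀ hX]
      calc wt d k m * ‖(f : (Fin d → ℤ) → ℂ) m‖ * (1 + normSq d m)^d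
          = (wt d k m * (1 + normSq d m)^d) * ‖(f : (Fin d → ℤ) → ℂ) m‖ := by ring
        _ = wt d (k + 2*d) m * ‖(f : (Fin d → ℤ) → ℂ) m‖ := by rw [wt_add]
        _ ≤ Cf := hCf' m
    have keyg : ∀ m, wt d k m * ‖(g : (Fin d → ℤ) → ℂ) m‖ ≤ Cg * ((1 + normSq d m)^d)⁻¹ := by
      intro m
      have hX : (0:ℝ) < (1 + normSq d m)^d := pow_pos (one_add_pos d m) d
      rw [← div_eq_mul_inv, le_div_iff₀ hX]
      calc wt d k m * ‖(g : (Fin d → ℤ) → ℂ) m‖ * (1 + normSq d m)^d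
          = (wt d k m * (1 + normSq d m)^d) * ‖(g : (Fin d → ℤ) → ℂ) m‖ := by ring
        _ = wt d (k + 2*d) m * ‖(g : (Fin d → ℤ) → ℂ) m‖ := by rw [wt_add]
        _ ≤ Cg := hCg' m
    -- term bound
    have hterm : ∀ p : (Fin d → ℤ) × (Fin d → ℤ),
        ‖A (D d p.1) (D d p.2) * (f : (Fin d → ℤ) → ℂ) p.1 * (g : (Fin d → ℤ) → ℂ) p.2‖
          ≤ (C * Cf * Cg) * (((1 + normSq d p.1)^d)⁻¹ * ((1 + normSq d p.2)^d)⁻¹) := by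
      rintro ⟨m, n⟩
      have hb1 : (0:ℝ) ≤ ((1 + normSq d m)^d)⁻¹ :=
        inv_nonneg.mpr (pow_nonneg (one_add_pos d m).le d)
      have hb2 : (0:ℝ) ≤ ((1 + normSq d n)^d)⁻¹ :=
        inv_nonneg.mpr (pow_nonneg (one_add_pos d n).le d)
      calc ‖A (D d m) (D d n) * (f : (Fin d → ℤ) → ℂ) m * (g : (Fin d → ℤ) → ℂ) n‖
          = ‖A (D d m) (D d n)‖ * ‖(f : (Fin d → ℤ) → ℂ) m‖ * ‖(g : (Fin d → ℤ) → ℂ) n‖ := by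
            rw [norm_mul, norm_mul]
        _ ≤ (C * wt d k m * wt d k n) * ‖(f : (Fin d → ℤ) → ℂ) m‖
              * ‖(g : (Fin d → ℤ) → ℂ) n‖ := by
            have := hωb m n
            gcongr
        _ = C * ((wt d k m * ‖(f : (Fin d → ℤ) → ℂ) m‖)
              * (wt d k n * ‖(g : (Fin d → ℤ) → ℂ) n‖)) := by ring
        _ ≤ C * ((Cf * ((1 + normSq d m)^d)⁻¹) * (Cg * ((1 + normSq d n)^d)⁻¹)) := by
            refine mul_le_mul_of_nonneg_left ?_ hC.le
            exact mul_le_mul (keyf m) (keyg n)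
              (mul_nonneg (wt_pos _).le (norm_nonneg _))
              (mul_nonneg hCf0 hb1)
        _ = (C * Cf * Cg) * (((1 + normSq d m)^d)⁻¹ * ((1 + normSq d n)^d)⁻¹) := by ring
    have hb : Summable (fun p : (Fin d → ℤ) × (Fin d → ℤ) =>
        ((1 + normSq d p.1)^d)⁻¹ * ((1 + normSq d p.2)^d)⁻¹) :=
      Summable.mul_of_nonneg (f := fun m : Fin d → ℤ => ((1 + normSq d m)^d)⁻¹)
        (g := fun m : Fin d → ℤ => ((1 + normSq d m)^d)⁻¹)
        (summable_wt_inv d) (summable_wt_inv d)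
        (fun m => inv_nonneg.mpr (pow_nonneg (one_add_pos d m).le d))
        (fun m => inv_nonneg.mpr (pow_nonneg (one_add_pos d m).le d))
    have hsum : Summable (fun p : (Fin d → ℤ) × (Fin d → ℤ) =>
        ‖A (D d p.1) (D d p.2) * (f : (Fin d → ℤ) → ℂ) p.1 * (g : (Fin d → ℤ) → ℂ) p.2‖) :=
      Summable.of_nonneg_of_le (fun p => norm_nonneg _) hterm (hb.mul_left (C * Cf * Cg))
    refine ⟨hsum, ?_⟩
    -- the value of the sum
    have hsum' : Summable (fun p : (Fin d → ℤ) × (Fin d → ℤ) =>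
        A (D d p.1) (D d p.2) * (f : (Fin d → ℤ) → ℂ) p.1 * (g : (Fin d → ℤ) → ℂ) p.2) :=
      Summable.of_norm hsum
    set S := ∑' p : (Fin d → ℤ) × (Fin d → ℤ),
        A (D d p.1) (D d p.2) * (f : (Fin d → ℤ) → ℂ) p.1 * (g : (Fin d → ℤ) → ℂ) p.2 with hS
    have h1 : Filter.Tendsto (fun F : Finset (Fin d → ℤ) => A (pt f F) (pt g F))
        Filter.atTop (nhds S) := by
      have := (hsum'.hasSum.comp tendsto_rect)
      refine this.congr fun F => ?_
      exact sum_rect A f g F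
    have h2 : Filter.Tendsto (fun F : Finset (Fin d → ℤ) => A (pt f F) (pt g F))
        Filter.atTop (nhds (A f g)) := by
      rw [Metric.tendsto_nhds]
      intro ε hε
      have Mf0 : 0 ≤ pk d k (f : (Fin d → ℤ) → ℂ) := pk_nonneg f.2
      have Mg0 : 0 ≤ pk d k (g : (Fin d → ℤ) → ℂ) := pk_nonneg g.2
      set Mf := pk d k (f : (Fin d → ℤ) → ℂ)
      set Mg := pk d k (g : (Fin d → ℤ) → ℂ)
      have hε' : 0 < ε / (2 * C * (Mf + Mg + 1)) := by positivity
      obtain ⟨F₁, hF₁⟩ := tail_small k f hε'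
      obtain ⟨F₂, hF₂⟩ := tail_small k g hε'
      rw [Filter.eventually_atTop]
      refine ⟨F₁ ∪ F₂, fun F hF => ?_⟩
      have hF1 : F₁ ⊆ F := (Finset.union_subset_iff.mp hF).1
      have hF2 : F₂ ⊆ F := (Finset.union_subset_iff.mp hF).2
      have hsplit : A f g - A (pt f F) (pt g F)
          = A (f - pt f F) g + A (pt f F) (g - pt g F) := by
        rw [map_sub, LinearMap.sub_apply, map_sub]
        ring
      have e1 : ‖A (f - pt f F) g‖ ≤ C * (ε / (2 * C * (Mf + Mg + 1))) * Mg := by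
        refine le_trans (hA _ _) ?_
        refine mul_le_mul_of_nonneg_right ?_ Mg0
        exact mul_le_mul_of_nonneg_left (hF₁ F hF1) hC.le
      have e2 : ‖A (pt f F) (g - pt g F)‖ ≤ C * Mf * (ε / (2 * C * (Mf + Mg + 1))) := by
        refine le_trans (hA _ _) ?_
        have hp : 0 ≤ pk d k ((g - pt g F : SchwartzZ d) : (Fin d → ℤ) → ℂ) :=
          pk_nonneg (g - pt g F).2
        calc C * pk d k ((pt f F : SchwartzZ d) : (Fin d → ℤ) → ℂ)
              * pk d k ((g - pt g F : SchwartzZ d) : (Fin d → ℤ) → ℂ)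
            ≤ C * Mf * pk d k ((g - pt g F : SchwartzZ d) : (Fin d → ℤ) → ℂ) := by
              refine mul_le_mul_of_nonneg_right ?_ hp
              exact mul_le_mul_of_nonneg_left (pk_pt_le k f F) hC.le
          _ ≤ C * Mf * (ε / (2 * C * (Mf + Mg + 1))) := by
              refine mul_le_mul_of_nonneg_left (hF₂ F hF2) ?_
              positivity
      have hd : dist (A (pt f F) (pt g F)) (A f g) < ε := by
        rw [dist_eq_norm, ← norm_neg]
        have : -(A (pt f F) (pt g F) - A f g) = A f g - A (pt f F) (pt g F) := by ring
        rw [this, hsplit]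
        calc ‖A (f - pt f F) g + A (pt f F) (g - pt g F)‖
            ≤ ‖A (f - pt f F) g‖ + ‖A (pt f F) (g - pt g F)‖ := norm_add_le _ _
          _ ≤ C * (ε / (2 * C * (Mf + Mg + 1))) * Mg
              + C * Mf * (ε / (2 * C * (Mf + Mg + 1))) := add_le_add e1 e2
          _ = C * (ε / (2 * C * (Mf + Mg + 1))) * (Mf + Mg) := by ring
          _ < ε := by
              have hCne : (C:ℝ) ≠ 0 := ne_of_gt hC
              have hTpos : (0:ℝ) < Mf + Mg + 1 := by linarith
              have key : C * (ε / (2 * C * (Mf + Mg + 1))) * (Mf + Mg)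
                  = ε * ((Mf + Mg) / (2 * (Mf + Mg + 1))) := by
                field_simp
              rw [key]
              have hlt : (Mf + Mg) / (2 * (Mf + Mg + 1)) < 1 := by
                rw [div_lt_one (by linarith)]
                linarith
              calc ε * ((Mf + Mg) / (2 * (Mf + Mg + 1))) < ε * 1 :=
                    mul_lt_mul_of_pos_left hlt hε
                _ = ε := mul_one ε
      exact hd
    exact tendsto_nhds_unique h1 h2
  · -- uniqueness
    rintro ω' ⟨-, hrep'⟩
    funext m n
    have h := (hrep' (D d m) (D d n)).2
    have ht : (∑' p : (Fin d → ℤ) × (Fin d → ℤ),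
        ω' p.1 p.2 * (D d m : (Fin d → ℤ) → ℂ) p.1 * (D d n : (Fin d → ℤ) → ℂ) p.2)
        = ω' m n := by
      rw [tsum_eq_single (m, n) ?_]
      · simp [D_coe, dl]
      · rintro ⟨a, b⟩ hab
        by_cases ha : a = m
        · have hb : b ≠ n := fun hb => hab (by rw [ha, hb])
          simp [D_coe, dl, hb]
        · simp [D_coe, dl, ha]
    rw [← ht, h]


end
end

section
/- Let d ≥ 1 and let ω : ℤ^d × ℤ^d → ℂ have polynomial growth. Then there exist k ∈ ℕ and C > 0 such that for all rapidly decreasing f, g : ℤ^d → ℂ one has ∑_{m,n ∈ ℤ^d} |ω(m,n)| |f(m)| |g(n)| ≤ C p_k(f) p_k(g); in particular the bilinear functional A(f,g) = ∑_{m,n} ω(m,n) f(m) g(n) is well defined and continuous on S(ℤ^d) × S(ℤ^d). -/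
noncomputable section

/-! ### Auxiliary lemmas -/

lemma normSq_nonneg' (d : ℕ) (n : Fin d → ℤ) : 0 ≤ normSq d n :=
  Finset.sum_nonneg fun i _ => sq_nonneg _

lemma one_add_normSq_pos (d : ℕ) (n : Fin d → ℤ) : 0 < 1 + normSq d n := by
  have := normSq_nonneg' d n; linarith

/-- The single-variable comparison series is summable. -/
lemma summable_factor : Summable fun m : ℤ => ((1 + (m : ℝ) ^ 2) ^ 2)⁻¹ := by
  have h : Summable fun m : ℤ => 1 / |(m : ℝ) + 1/2| ^ (4 : ℝ) :=
    (Real.summable_one_div_int_add_rpow (1/2) 4).mpr (by norm_num)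
  refine (h.mul_left 4).of_nonneg_of_le (fun m => by positivity) (fun m => ?_)
  set a : ℝ := |(m : ℝ)| with ha
  have ha0 : 0 ≤ a := abs_nonneg _
  have hasq : a ^ 2 = (m : ℝ) ^ 2 := sq_abs _
  have hxa : |(m : ℝ) + 1/2| ≤ a + 1 := by
    calc |(m : ℝ) + 1/2| ≤ |(m : ℝ)| + |(1/2 : ℝ)| := abs_add_le _ _
    _ ≤ a + 1 := by
      rw [← ha, abs_of_nonneg (by norm_num : (0:ℝ) ≤ 1/2)]; linarith
  have hne : ((m : ℝ) + 1/2) ≠ 0 := by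
    intro h0
    have h2 : (2 : ℝ) * m = -1 := by linarith
    have : ((2 * m : ℤ) : ℝ) = ((-1 : ℤ) : ℝ) := by push_cast; linarith
    have := Int.cast_injective (α := ℝ) this
    omega
  have hxpos : (0:ℝ) < |(m : ℝ) + 1/2| ^ (4 : ℕ) := by positivity
  have h1 : |(m : ℝ) + 1/2| ^ (4 : ℝ) = |(m : ℝ) + 1/2| ^ (4 : ℕ) := by
    rw [← Real.rpow_natCast]; norm_num
  have hkey : |(m : ℝ) + 1/2| ^ (4 : ℕ) ≤ 4 * (1 + (m : ℝ) ^ 2) ^ 2 := by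
    have h4 : |(m : ℝ) + 1/2| ^ (4 : ℕ) ≤ (a + 1) ^ (4 : ℕ) :=
      pow_le_pow_left₀ (abs_nonneg _) hxa 4
    have h5 : (a + 1) ^ 2 ≤ 2 * (1 + a ^ 2) := by nlinarith [sq_nonneg (a - 1)]
    have h6 : (a + 1) ^ 4 ≤ (2 * (1 + a ^ 2)) ^ 2 := by
      calc (a + 1) ^ 4 = ((a + 1) ^ 2) ^ 2 := by ring
      _ ≤ (2 * (1 + a ^ 2)) ^ 2 := pow_le_pow_left₀ (sq_nonneg _) h5 2
    calc |(m : ℝ) + 1/2| ^ (4 : ℕ) ≤ (a + 1) ^ 4 := h4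
    _ ≤ (2 * (1 + a ^ 2)) ^ 2 := h6
    _ = 4 * (1 + (m : ℝ) ^ 2) ^ 2 := by rw [hasq]; ring
  rw [h1, mul_one_div]
  rw [le_div_iff₀ hxpos, inv_mul_eq_div, div_le_iff₀ (by positivity : (0:ℝ) < (1 + (m:ℝ)^2)^2)]
  linarith [hkey]

/-- Summability of products over `ℤ^d`. -/
lemma summable_pi_prod (d : ℕ) {h : ℤ → ℝ} (hs : Summable h) (h0 : ∀ m, 0 ≤ h m) :
    Summable fun n : Fin d → ℤ => ∏ i, h (n i) := by
  induction d with
  | zero =>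
    haveI : Unique (Fin 0 → ℤ) := ⟨⟨fun i => i.elim0⟩, fun f => funext fun i => i.elim0⟩
    exact Summable.of_finite
  | succ d ih =>
    obtain ⟨e, he⟩ : ∃ e : (ℤ × (Fin d → ℤ)) ≃ (Fin (d+1) → ℤ),
        ∀ p, e p = Fin.cons p.1 p.2 :=
      ⟨⟨fun p => Fin.cons p.1 p.2, fun n => (n 0, fun i => n i.succ),
        fun p => by simp, fun n => by
          funext i
          refine Fin.cases ?_ ?_ i <;> simp⟩, fun p => rfl⟩
    have hle1 : (0 : ℤ → ℝ) ≤ h := fun m => h0 m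
    have hle2 : (0 : (Fin d → ℤ) → ℝ) ≤ fun n => ∏ i, h (n i) :=
      fun n => Finset.prod_nonneg fun i _ => h0 _
    have hsum : Summable fun p : ℤ × (Fin d → ℤ) => h p.1 * ∏ i, h (p.2 i) :=
      Summable.mul_of_nonneg (f := h) (g := fun n : Fin d → ℤ => ∏ i, h (n i)) hs ih hle1 hle2
    have key : ∀ p : ℤ × (Fin d → ℤ),
        h p.1 * ∏ i, h (p.2 i) = ∏ i, h ((Fin.cons p.1 p.2 : Fin (d+1) → ℤ) i) := by
      intro p
      rw [Fin.prod_univ_succ]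
      simp
    have h2 : Summable ((fun n : Fin (d+1) → ℤ => ∏ i, h (n i)) ∘ e) := by
      refine hsum.congr fun p => ?_
      simp only [Function.comp_apply, he]
      exact key p
    exact e.summable_iff.mp h2

lemma le_pk {d k : ℕ} {f : (Fin d → ℤ) → ℂ} (hf : RapidDecay d f) (n : Fin d → ℤ) :
    (1 + normSq d n) ^ ((k : ℝ) / 2) * ‖f n‖ ≤ pk d k f := by
  obtain ⟨Cf, hCf⟩ := hf k
  exact le_ciSup ⟨Cf, by rintro x ⟨n, rfl⟩; exact hCf n⟩ n

lemma pk_nonneg {d k : ℕ} {f : (Fin d → ℤ) → ℂ} (hf : RapidDecay d f) : 0 ≤ pk d k f := by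
  refine le_trans ?_ (le_pk hf (fun _ => 0))
  have := one_add_normSq_pos d (fun _ => 0)
  positivity

/-- Decay bound on `f` from the seminorm. -/
lemma norm_le_pk {d k : ℕ} {f : (Fin d → ℤ) → ℂ} (hf : RapidDecay d f) (n : Fin d → ℤ) :
    ‖f n‖ ≤ (1 + normSq d n) ^ (-((k : ℝ) / 2)) * pk d k f := by
  have hA := one_add_normSq_pos d n
  have h1 := le_pk (k := k) hf n
  have h2 : (1 + normSq d n) ^ (-((k : ℝ) / 2)) * ((1 + normSq d n) ^ ((k : ℝ) / 2) * ‖f n‖)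
      ≤ (1 + normSq d n) ^ (-((k : ℝ) / 2)) * pk d k f :=
    mul_le_mul_of_nonneg_left h1 (Real.rpow_nonneg hA.le _)
  calc ‖f n‖ = (1 + normSq d n) ^ (-((k : ℝ) / 2)) *
        ((1 + normSq d n) ^ ((k : ℝ) / 2) * ‖f n‖) := by
        rw [← mul_assoc, ← Real.rpow_add hA]; simp
  _ ≤ _ := h2

/-- The comparison: negative power of `1 + |n|²` is dominated by the product function. -/
lemma rpow_neg_le_prod (d : ℕ) (n : Fin d → ℤ) :
    (1 + normSq d n) ^ (-(2 * (d : ℝ))) ≤ ∏ i, ((1 + (n i : ℝ) ^ 2) ^ 2)⁻¹ := by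
  have hA := one_add_normSq_pos d n
  have hAc : (1 + normSq d n) ^ (-(2 * (d : ℝ)))
      = ((1 + normSq d n) ^ (2 * d : ℕ))⁻¹ := by
    rw [Real.rpow_neg hA.le, ← Real.rpow_natCast]
    push_cast; ring_nf
  rw [hAc, Finset.prod_inv_distrib]
  have hprod : (∏ i, (1 + (n i : ℝ) ^ 2) ^ 2) ≤ (1 + normSq d n) ^ (2 * d : ℕ) := by
    have hle : ∀ i : Fin d, (1 + (n i : ℝ) ^ 2) ^ 2 ≤ (1 + normSq d n) ^ 2 := by
      intro i
      have h1 : (n i : ℝ) ^ 2 ≤ normSq d n :=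
        Finset.single_le_sum (fun j _ => sq_nonneg ((n j : ℝ))) (Finset.mem_univ i)
      have h2 : (0:ℝ) ≤ 1 + (n i : ℝ) ^ 2 := by positivity
      exact pow_le_pow_left₀ h2 (by linarith) 2
    calc (∏ i, (1 + (n i : ℝ) ^ 2) ^ 2) ≤ ∏ _i : Fin d, (1 + normSq d n) ^ 2 :=
          Finset.prod_le_prod (fun i _ => by positivity) (fun i _ => hle i)
    _ = ((1 + normSq d n) ^ 2) ^ d := by
        rw [Finset.prod_const, Finset.card_univ, Fintype.card_fin]
    _ = (1 + normSq d n) ^ (2 * d : ℕ) := by rw [← pow_mul]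
  have hppos : (0:ℝ) < ∏ i, (1 + (n i : ℝ) ^ 2) ^ 2 :=
    Finset.prod_pos fun i _ => by positivity
  exact inv_anti₀ hppos hprod

set_option maxHeartbeats 1000000 in
/-- If `ω` has polynomial growth then for some `k` and `C > 0`, for all
rapidly decreasing `f, g`: `∑_{m,n} |ω(m,n)| |f(m)| |g(n)| ≤ C p_k(f) p_k(g)`; in particular
the bilinear pairing `(f,g) ↦ ∑ ω(m,n) f(m) g(n)` is well defined and continuous. -/
theorem polygrowth_pairing_continuous (d : ℕ) (hd : 1 ≤ d)
    (ω : (Fin d → ℤ) → (Fin d → ℤ) → ℂ) (hω : PolyGrowth d ω) :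
    ∃ (k : ℕ) (C : ℝ), 0 < C ∧ ∀ f g : (Fin d → ℤ) → ℂ,
      RapidDecay d f → RapidDecay d g →
      Summable (fun p : (Fin d → ℤ) × (Fin d → ℤ) => ‖ω p.1 p.2‖ * ‖f p.1‖ * ‖g p.2‖) ∧
      (∑' p : (Fin d → ℤ) × (Fin d → ℤ), ‖ω p.1 p.2‖ * ‖f p.1‖ * ‖g p.2‖) ≤
        C * pk d k f * pk d k g := by
  classical
  obtain ⟨C, hC, N, hωb⟩ := hω
  set k : ℕ := N + 4 * d with hk
  set H : (Fin d → ℤ) → ℝ := fun n => ∏ i, ((1 + (n i : ℝ) ^ 2) ^ 2)⁻¹ with hHdef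
  have hHnn : ∀ n, 0 ≤ H n := fun n => Finset.prod_nonneg fun i _ => by positivity
  have hHsum : Summable H := summable_pi_prod (h := fun m : ℤ => ((1 + (m : ℝ) ^ 2) ^ 2)⁻¹) d summable_factor
    (fun m => by positivity)
  set S : ℝ := ∑' n, H n with hSdef
  have hS1 : (1:ℝ) ≤ S := by
    have hz : H (fun _ => 0) = 1 := by simp [hHdef]
    have := Summable.le_tsum hHsum (fun _ => 0) (fun j _ => hHnn j)
    rw [hz] at this; exact this
  have hSpos : (0:ℝ) < S := lt_of_lt_of_le one_pos hS1
  refine ⟨k, C * S * S, by positivity, fun f g hf hg => ?_⟩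
  have hpf : 0 ≤ pk d k f := pk_nonneg hf
  have hpg : 0 ≤ pk d k g := pk_nonneg hg
  -- the pointwise bound
  have hpt : ∀ p : (Fin d → ℤ) × (Fin d → ℤ),
      ‖ω p.1 p.2‖ * ‖f p.1‖ * ‖g p.2‖ ≤ (C * pk d k f * pk d k g) * (H p.1 * H p.2) := by
    rintro ⟨m, n⟩
    have hAm := one_add_normSq_pos d m
    have hAn := one_add_normSq_pos d n
    have hfm := norm_le_pk (k := k) hf m
    have hgn := norm_le_pk (k := k) hg n
    have hstep1 : ‖ω m n‖ * ‖f m‖ * ‖g n‖ ≤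
        (C * (1 + normSq d m) ^ ((N : ℝ) / 2) * (1 + normSq d n) ^ ((N : ℝ) / 2)) *
        ((1 + normSq d m) ^ (-((k : ℝ) / 2)) * pk d k f) *
        ((1 + normSq d n) ^ (-((k : ℝ) / 2)) * pk d k g) := by
      have h1 : 0 ≤ ‖f m‖ := norm_nonneg _
      have h2 : 0 ≤ ‖g n‖ := norm_nonneg _
      have hωnn : (0:ℝ) ≤ C * (1 + normSq d m) ^ ((N : ℝ) / 2) *
          (1 + normSq d n) ^ ((N : ℝ) / 2) := by positivity
      exact mul_le_mul (mul_le_mul (hωb m n) hfm h1 hωnn) hgn h2 (by positivity)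
    have hexp : ∀ z : Fin d → ℤ, (1 + normSq d z) ^ ((N : ℝ) / 2) *
        (1 + normSq d z) ^ (-((k : ℝ) / 2)) = (1 + normSq d z) ^ (-(2 * (d : ℝ))) := by
      intro z
      rw [← Real.rpow_add (one_add_normSq_pos d z)]
      congr 1
      rw [hk]; push_cast; ring
    have hstep2 : (C * (1 + normSq d m) ^ ((N : ℝ) / 2) * (1 + normSq d n) ^ ((N : ℝ) / 2)) *
        ((1 + normSq d m) ^ (-((k : ℝ) / 2)) * pk d k f) *
        ((1 + normSq d n) ^ (-((k : ℝ) / 2)) * pk d k g)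
        = (C * pk d k f * pk d k g) *
          ((1 + normSq d m) ^ (-(2 * (d : ℝ))) * (1 + normSq d n) ^ (-(2 * (d : ℝ)))) := by
      rw [← hexp m, ← hexp n]; ring
    have hstep3 : (C * pk d k f * pk d k g) *
          ((1 + normSq d m) ^ (-(2 * (d : ℝ))) * (1 + normSq d n) ^ (-(2 * (d : ℝ))))
        ≤ (C * pk d k f * pk d k g) * (H m * H n) := by
      refine mul_le_mul_of_nonneg_left ?_ (by positivity)
      exact mul_le_mul (rpow_neg_le_prod d m) (rpow_neg_le_prod d n)
        (Real.rpow_nonneg hAn.le _) (hHnn m)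
    calc ‖ω m n‖ * ‖f m‖ * ‖g n‖ ≤ _ := hstep1
    _ = _ := hstep2
    _ ≤ _ := hstep3
  have hHle : (0 : (Fin d → ℤ) → ℝ) ≤ H := fun n => hHnn n
  have hHHsum : Summable (fun p : (Fin d → ℤ) × (Fin d → ℤ) => H p.1 * H p.2) :=
    Summable.mul_of_nonneg (f := H) (g := H) hHsum hHsum hHle hHle
  have hBsum : Summable (fun p : (Fin d → ℤ) × (Fin d → ℤ) =>
      (C * pk d k f * pk d k g) * (H p.1 * H p.2)) :=
    hHHsum.mul_left _
  have hTsum : Summable (fun p : (Fin d → ℤ) × (Fin d → ℤ) =>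
      ‖ω p.1 p.2‖ * ‖f p.1‖ * ‖g p.2‖) :=
    hBsum.of_nonneg_of_le (fun p => by positivity) hpt
  refine ⟨hTsum, ?_⟩
  have hBtsum : (∑' p : (Fin d → ℤ) × (Fin d → ℤ),
      (C * pk d k f * pk d k g) * (H p.1 * H p.2)) = (C * pk d k f * pk d k g) * (S * S) := by
    rw [tsum_mul_left]
    congr 1
    rw [Summable.tsum_prod' hHHsum (fun a => hHsum.mul_left (H a))]
    calc (∑' (a : Fin d → ℤ), ∑' (b : Fin d → ℤ), H a * H b)
        = ∑' (a : Fin d → ℤ), H a * S := by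
          refine tsum_congr fun a => ?_; rw [tsum_mul_left]
    _ = S * S := by rw [tsum_mul_right]
  calc (∑' p : (Fin d → ℤ) × (Fin d → ℤ), ‖ω p.1 p.2‖ * ‖f p.1‖ * ‖g p.2‖)
      ≤ ∑' p : (Fin d → ℤ) × (Fin d → ℤ), (C * pk d k f * pk d k g) * (H p.1 * H p.2) :=
        Summable.tsum_le_tsum hpt hTsum hBsum
  _ = (C * pk d k f * pk d k g) * (S * S) := hBtsum
  _ = C * S * S * pk d k f * pk d k g := by ring
  _ ≤ C * S * S * pk d k f * pk d k g := le_refl _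

end
end
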